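/- Suppose A N = N. With C, T_λ, T_μ, T, α, λ, S, η and the Jacobi operator R_X Y := g(X,X)Y - g(X,Y)X + 3g(J X,Y)J X + g(A X,X)A Y - g(A X,Y)A X + g(J A X, X)J A Y + g(A J X, Y)J A X + g(S X,X)S Y - g(S X,Y)S X as in the type-B tube model, the following block formulas hold. For X ∈ T_λ: R_X(ξ) = αλ·g(X,X)·ξ, R_X(Y) = (λ² + 2)·(g(X,X)Y - g(X,Y)X) for Y ∈ T_λ, and R_X(Y) = 2 g(J X, Y)·J X for Y ∈ T_μ. For X ∈ T_μ: R_X(ξ) = 2 g(X,X)·ξ, R_X(Y) = 2 g(J X, Y)·J X for Y ∈ T_λ, and R_X(Y) = 2·(g(X,X)Y - g(X,Y)X) for Y ∈ T_μ. -/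

import Mathlib

noncomputable section

variable {V : Type*}

/-- The real inner product `g(x,y) = Re⟨x,y⟩` induced by the Hermitian inner product. -/
def g [NormedAddCommGroup V] [InnerProductSpace ℂ V] (x y : V) : ℝ := (inner ℂ x y : ℂ).re

/-- The Jacobi operator `R_X` of the type-B tube, obtained from the Gauss equation. -/
def RXop [NormedAddCommGroup V] [InnerProductSpace ℂ V]
    (A S : V →ₗ[ℝ] V) (X Y : V) : V :=
  g X X • Y - g X Y • X + (3 * g (Complex.I • X) Y) • (Complex.I • X)
    + g (A X) X • A Y - g (A X) Y • A X
    + g (Complex.I • A X) X • (Complex.I • A Y)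
    + g (A (Complex.I • X)) Y • (Complex.I • A X)
    + g (S X) X • S Y - g (S X) Y • S X

/-!
On simultaneous eigenvectors `X`, `Y` of `A` (eigenvalues `ε`, `δ`) and `S` (eigenvalues `a`, `b`)
every term of `R_X Y` is a multiple of `Y`, `X` or `JX`: `JX` is an `A`-eigenvector of eigenvalue
`-ε` because `A` is conjugate-linear, and `g(JX, X) = 0`. Since `A` is a `g`-isometry, eigenvectors
with `εδ = -1` are `g`-orthogonal; for `ε, δ = ±1` this kills the `X`-component when `δ = -ε` and
the `JX`-component when `δ = ε`. The six blocks are the cases `ε, δ ∈ {±1}`, where `ξ = -JN` has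
`Aξ = -ξ` because `AN = N`.
-/

section JacobiBlocks

variable [NormedAddCommGroup V] [InnerProductSpace ℂ V]

open Complex

lemma g_comm (x y : V) : g x y = g y x := inner_re_symm (𝕜 := ℂ) x y

lemma g_smul_left (r : ℝ) (x y : V) : g (r • x) y = r * g x y := by
  rw [g, RCLike.real_smul_eq_coe_smul (K := ℂ), inner_smul_left]
  simp [g]

lemma g_smul_right (r : ℝ) (x y : V) : g x (r • y) = r * g x y := by
  rw [g, RCLike.real_smul_eq_coe_smul (K := ℂ), inner_smul_right]
  simp [g]

lemma g_neg_right (x y : V) : g x (-y) = -g x y := by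
  simp [g, inner_neg_right]

lemma g_I_smul_I_smul (x y : V) : g (I • x) (I • y) = g x y := by
  simp [g]

lemma g_I_smul_self (x : V) : g (I • x) x = 0 := by
  simp [g, ← ofReal_pow]

lemma g_map_map {A : V →ₗ[ℝ] V} (hA_herm : ∀ x y, (inner ℂ (A x) (A y) : ℂ) = inner ℂ y x)
    (x y : V) : g (A x) (A y) = g x y := by
  rw [g, hA_herm, ← g, g_comm]

lemma map_I_smul_of_eigen {A : V →ₗ[ℝ] V} (hA_antiJ : ∀ x, A (I • x) = -(I • A x))
    {ε : ℝ} {X : V} (hX : A X = ε • X) : A (I • X) = -ε • (I • X) := by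
  rw [hA_antiJ, hX, smul_comm, neg_smul]

lemma g_eq_zero_of_eigen {A : V →ₗ[ℝ] V}
    (hA_herm : ∀ x y, (inner ℂ (A x) (A y) : ℂ) = inner ℂ y x)
    {ε δ : ℝ} {X Y : V} (hX : A X = ε • X) (hY : A Y = δ • Y) (hεδ : ε * δ = -1) :
    g X Y = 0 := by
  have h := g_map_map hA_herm X Y
  rw [hX, hY, g_smul_left, g_smul_right, ← mul_assoc, hεδ] at h
  linarith

lemma RXop_of_eigen {A S : V →ₗ[ℝ] V} (hA_antiJ : ∀ x, A (I • x) = -(I • A x))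
    {ε δ a b : ℝ} {X Y : V} (hAX : A X = ε • X) (hAY : A Y = δ • Y)
    (hSX : S X = a • X) (hSY : S Y = b • Y) :
    RXop A S X Y = ((1 + ε * δ + a * b) * g X X) • Y - ((1 + ε ^ 2 + a ^ 2) * g X Y) • X
      + ((3 - ε ^ 2) * g (I • X) Y) • (I • X) := by
  simp only [RXop, hAX, hAY, hSX, hSY, map_I_smul_of_eigen hA_antiJ hAX, smul_comm (I : ℂ) ε X,
    g_smul_left, g_I_smul_self]
  module

lemma RXop_of_eigen_same_sign {A S : V →ₗ[ℝ] V} (hA_antiJ : ∀ x, A (I • x) = -(I • A x))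
    (hA_herm : ∀ x y, (inner ℂ (A x) (A y) : ℂ) = inner ℂ y x)
    {ε a b : ℝ} (hε : ε ^ 2 = 1) {X Y : V} (hAX : A X = ε • X) (hAY : A Y = ε • Y)
    (hSX : S X = a • X) (hSY : S Y = b • Y) :
    RXop A S X Y = ((2 + a * b) * g X X) • Y - ((2 + a ^ 2) * g X Y) • X := by
  have hIXY : g (I • X) Y = 0 :=
    g_eq_zero_of_eigen hA_herm (map_I_smul_of_eigen hA_antiJ hAX) hAY (by linear_combination -hε)
  rw [RXop_of_eigen hA_antiJ hAX hAY hSX hSY, hIXY, ← sq, hε]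
  module

lemma RXop_of_eigen_opposite_sign {A S : V →ₗ[ℝ] V} (hA_antiJ : ∀ x, A (I • x) = -(I • A x))
    (hA_herm : ∀ x y, (inner ℂ (A x) (A y) : ℂ) = inner ℂ y x)
    {ε a b : ℝ} (hε : ε ^ 2 = 1) {X Y : V} (hAX : A X = ε • X) (hAY : A Y = -ε • Y)
    (hSX : S X = a • X) (hSY : S Y = b • Y) :
    RXop A S X Y = (a * b * g X X) • Y + (2 * g (I • X) Y) • (I • X) := by
  have hXY : g X Y = 0 := g_eq_zero_of_eigen hA_herm hAX hAY (by linear_combination -hε)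
  rw [RXop_of_eigen hA_antiJ hAX hAY hSX hSY, hXY, mul_neg, ← sq, hε]
  module

end JacobiBlocks

theorem stmt_19_general [NormedAddCommGroup V] [InnerProductSpace ℂ V]
    (A : V →ₗ[ℝ] V)
    (hA_antiJ : ∀ x, A (Complex.I • x) = -(Complex.I • A x))
    (hA_herm : ∀ x y, (inner ℂ (A x) (A y) : ℂ) = inner ℂ y x)
    (N : V)
    (ξ : V) (hξ : ξ = -(Complex.I • N))
    (hAN : A N = N)
    (α lam : ℝ) (S : V →ₗ[ℝ] V)
    (hSξ : S ξ = α • ξ)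
    (hSlam : ∀ X : V, g X N = 0 → g X ξ = 0 → A X = X → S X = lam • X)
    (hSmu : ∀ X : V, g X N = 0 → g X ξ = 0 → A X = -X → S X = 0) :
    (∀ X : V, g X N = 0 → g X ξ = 0 → A X = X →
      RXop A S X ξ = (α * lam * g X X) • ξ ∧
      (∀ Y : V, g Y N = 0 → g Y ξ = 0 → A Y = Y →
        RXop A S X Y = (lam ^ 2 + 2) • (g X X • Y - g X Y • X)) ∧
      (∀ Y : V, g Y N = 0 → g Y ξ = 0 → A Y = -Y →
        RXop A S X Y = (2 * g (Complex.I • X) Y) • (Complex.I • X))) ∧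
    (∀ X : V, g X N = 0 → g X ξ = 0 → A X = -X →
      RXop A S X ξ = (2 * g X X) • ξ ∧
      (∀ Y : V, g Y N = 0 → g Y ξ = 0 → A Y = Y →
        RXop A S X Y = (2 * g (Complex.I • X) Y) • (Complex.I • X)) ∧
      (∀ Y : V, g Y N = 0 → g Y ξ = 0 → A Y = -Y →
        RXop A S X Y = (2 : ℝ) • (g X X • Y - g X Y • X))) := by
  have hAξ : A ξ = (-1 : ℝ) • ξ := by rw [hξ, map_neg, hA_antiJ, hAN, neg_one_smul]
  have hIξ {X : V} (hXN : g X N = 0) : g (Complex.I • X) ξ = 0 := by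
    rw [hξ, g_neg_right, g_I_smul_I_smul, hXN, neg_zero]
  have hplus {X : V} (hX : A X = X) : A X = (1 : ℝ) • X := by rw [hX, one_smul]
  have hminus {X : V} (hX : A X = -X) : A X = (-1 : ℝ) • X := by rw [hX, neg_one_smul]
  have hSzero {X : V} (hX : S X = 0) : S X = (0 : ℝ) • X := by rw [hX, zero_smul]
  refine ⟨fun X hXN hXξ hX => ⟨?_, fun Y hYN hYξ hY => ?_, fun Y hYN hYξ hY => ?_⟩,
    fun X hXN hXξ hX => ⟨?_, fun Y hYN hYξ hY => ?_, fun Y hYN hYξ hY => ?_⟩⟩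
  · rw [RXop_of_eigen_opposite_sign hA_antiJ hA_herm (one_pow 2) (hplus hX) (by simpa using hAξ)
      (hSlam X hXN hXξ hX) hSξ, hIξ hXN]
    module
  · rw [RXop_of_eigen_same_sign hA_antiJ hA_herm (one_pow 2) (hplus hX) (hplus hY)
      (hSlam X hXN hXξ hX) (hSlam Y hYN hYξ hY)]
    module
  · rw [RXop_of_eigen_opposite_sign hA_antiJ hA_herm (one_pow 2) (hplus hX)
      (by simpa using hminus hY) (hSlam X hXN hXξ hX) (hSzero (hSmu Y hYN hYξ hY))]
    module
  · rw [RXop_of_eigen_same_sign hA_antiJ hA_herm (by norm_num) (hminus hX) hAξ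
      (hSzero (hSmu X hXN hXξ hX)) hSξ, hXξ]
    module
  · rw [RXop_of_eigen_opposite_sign hA_antiJ hA_herm (by norm_num) (hminus hX)
      (by simpa using hplus hY) (hSzero (hSmu X hXN hXξ hX)) (hSlam Y hYN hYξ hY)]
    module
  · rw [RXop_of_eigen_same_sign hA_antiJ hA_herm (by norm_num) (hminus hX) (hminus hY)
      (hSzero (hSmu X hXN hXξ hX)) (hSzero (hSmu Y hYN hYξ hY))]
    module

/-- Block formulas for the Jacobi operator `R_X` of the type-B tube model: for
`X ∈ T_λ`: `R_X(ξ) = αλ g(X,X)·ξ`, `R_X(Y) = (λ²+2)(g(X,X)Y - g(X,Y)X)` on `T_λ`, and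
`R_X(Y) = 2g(JX,Y)·JX` on `T_μ`; for `X ∈ T_μ`: `R_X(ξ) = 2g(X,X)·ξ`,
`R_X(Y) = 2g(JX,Y)·JX` on `T_λ`, and `R_X(Y) = 2(g(X,X)Y - g(X,Y)X)` on `T_μ`. -/
theorem stmt_19 [NormedAddCommGroup V] [InnerProductSpace ℂ V]
    (A : V →ₗ[ℝ] V)
    (hA_invol : ∀ x, A (A x) = x)
    (hA_antiJ : ∀ x, A (Complex.I • x) = -(Complex.I • A x))
    (hA_herm : ∀ x y, (inner ℂ (A x) (A y) : ℂ) = inner ℂ y x)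
    (N : V) (hN : ‖N‖ = 1)
    (ξ : V) (hξ : ξ = -(Complex.I • N))
    (hAN : A N = N)
    (α lam : ℝ) (S : V →ₗ[ℝ] V)
    (hS_tan : ∀ Y : V, g Y N = 0 → g (S Y) N = 0)
    (hSξ : S ξ = α • ξ)
    (hSlam : ∀ X : V, g X N = 0 → g X ξ = 0 → A X = X → S X = lam • X)
    (hSmu : ∀ X : V, g X N = 0 → g X ξ = 0 → A X = -X → S X = 0) :
    (∀ X : V, g X N = 0 → g X ξ = 0 → A X = X →
      RXop A S X ξ = (α * lam * g X X) • ξ ∧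
      (∀ Y : V, g Y N = 0 → g Y ξ = 0 → A Y = Y →
        RXop A S X Y = (lam ^ 2 + 2) • (g X X • Y - g X Y • X)) ∧
      (∀ Y : V, g Y N = 0 → g Y ξ = 0 → A Y = -Y →
        RXop A S X Y = (2 * g (Complex.I • X) Y) • (Complex.I • X))) ∧
    (∀ X : V, g X N = 0 → g X ξ = 0 → A X = -X →
      RXop A S X ξ = (2 * g X X) • ξ ∧
      (∀ Y : V, g Y N = 0 → g Y ξ = 0 → A Y = Y →
        RXop A S X Y = (2 * g (Complex.I • X) Y) • (Complex.I • X)) ∧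
      (∀ Y : V, g Y N = 0 → g Y ξ = 0 → A Y = -Y →
        RXop A S X Y = (2 : ℝ) • (g X X • Y - g X Y • X))) :=
  stmt_19_general A hA_antiJ hA_herm N ξ hξ hAN α lam S hSξ hSlam hSmu
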